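/- arXiv:2501.07939 — 4 statements merged into one kernel-verified Lean document; each statement's English description precedes it below -/
import Mathlib

section
/- Every permutation σ of Z_d whose induced permutation gate P (P|z⟩ = |σ(z)⟩) normalizes the Pauli group is an affine map: σ(z) = a·z + b for some a ∈ Z_d*, b ∈ Z_d. -/
open Matrix

noncomputable section

/-- ω = e^{2πi/d}, the primitive d-th root of unity. -/
def om (d : ℕ) : ℂ := Complex.exp (2 * Real.pi * Complex.I / d)

/-- The qudit Pauli Z gate: Z|z⟩ = ω^z |z⟩. -/
def Zg (d : ℕ) : Matrix (ZMod d) (ZMod d) ℂ :=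
  Matrix.diagonal fun z => om d ^ z.val

/-- The qudit Pauli X (shift) gate: X|z⟩ = |z+1⟩. -/
def Xg (d : ℕ) : Matrix (ZMod d) (ZMod d) ℂ :=
  fun i j => if i = j + 1 then 1 else 0

/-- The Weyl operator W(p,q) = ω^{-2⁻¹ p q} Z^p X^q. -/
def Wg (d : ℕ) [NeZero d] (p q : ZMod d) : Matrix (ZMod d) (ZMod d) ℂ :=
  om d ^ ((-(2 : ZMod d)⁻¹ * p * q).val) • (Zg d ^ p.val * Xg d ^ q.val)

/-- Pauli coefficient f_M(p,q) = d⁻¹ Tr(W(-p,-q) M). -/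
def fM (d : ℕ) [NeZero d] (M : Matrix (ZMod d) (ZMod d) ℂ) (p q : ZMod d) : ℂ :=
  (d : ℂ)⁻¹ * (Wg d (-p) (-q) * M).trace

end
/-- The permutation gate of a permutation σ of Z_d. -/
noncomputable def permMat (d : ℕ) (σ : Equiv.Perm (ZMod d)) : Matrix (ZMod d) (ZMod d) ℂ :=
  fun i j => if i = σ j then 1 else 0

/-- A Pauli gate: ω^c Z^p X^q. -/
def IsPauli (d : ℕ) [NeZero d] (G : Matrix (ZMod d) (ZMod d) ℂ) : Prop :=
  ∃ c p q : ZMod d, G = om d ^ c.val • (Zg d ^ p.val * Xg d ^ q.val)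

lemma Xg_pow (d : ℕ) [NeZero d] (n : ℕ) (i j : ZMod d) :
    (Xg d ^ n) i j = if i = j + (n : ℕ) then 1 else 0 := by
  induction n generalizing j with
  | zero => simp [Matrix.one_apply]
  | succ n ih =>
    rw [pow_succ, Matrix.mul_apply]
    simp only [Xg, mul_ite, mul_one, mul_zero]
    rw [Finset.sum_ite_eq' Finset.univ (j+1) (fun k => (Xg d ^ n) i k)]
    simp [ih, add_assoc, add_comm (1 : ZMod d)]

lemma Zg_pow_mul_Xg_pow (d : ℕ) [NeZero d] (p q : ℕ) (i j : ZMod d) :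
    (Zg d ^ p * Xg d ^ q) i j = (om d ^ i.val) ^ p * (if i = j + (q:ℕ) then 1 else 0) := by
  rw [Matrix.mul_apply]
  have hz : Zg d ^ p = Matrix.diagonal (fun z => (om d ^ z.val) ^ p) := by
    rw [Zg, Matrix.diagonal_pow]; rfl
  rw [hz]
  simp [Matrix.diagonal_apply, Xg_pow, Finset.sum_ite_eq, ite_mul]

lemma perm_conj_Xg (d : ℕ) [NeZero d] (σ : Equiv.Perm (ZMod d)) (i j : ZMod d) :
    (permMat d σ * Xg d * star (permMat d σ)) i j
      = if i = σ (σ.symm j + 1) then 1 else 0 := by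
  rw [Matrix.mul_assoc, Matrix.mul_apply]
  have hstep : ∀ k : ZMod d, (Xg d * star (permMat d σ)) k j
      = if k = σ.symm j + 1 then 1 else 0 := by
    intro k
    rw [Matrix.mul_apply]
    have hs : ∀ (P : Prop) [Decidable P], star (if P then (1:ℂ) else 0) = if P then 1 else 0 := by
      intro P _; split <;> simp
    simp only [Matrix.star_apply, permMat, Xg, hs]
    have : ∀ l : ZMod d, (if k = l + 1 then (1:ℂ) else 0) * (if j = σ l then 1 else 0)
        = if l = σ.symm j then (if k = l + 1 then (1:ℂ) else 0) else 0 := by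
      intro l
      by_cases hl : l = σ.symm j
      · subst hl; simp
      · have : j ≠ σ l := by
          intro hj; exact hl (by simp [hj])
        simp [this, hl]
    simp_rw [this]
    rw [Finset.sum_ite_eq' Finset.univ (σ.symm j)]
    simp
  simp_rw [hstep, mul_ite, mul_one, mul_zero]
  rw [Finset.sum_ite_eq' Finset.univ (σ.symm j + 1) (fun k => permMat d σ i k)]
  simp [permMat]


/-- Every permutation of Z_d whose permutation gate normalizes the Pauli group
is an affine map z ↦ a·z + b with a ≠ 0. -/
theorem clifford_permutation_is_affine (d : ℕ) (hd : Nat.Prime d) (hodd : Odd d) [NeZero d]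
    (σ : Equiv.Perm (ZMod d))
    (h : ∀ g : Matrix (ZMod d) (ZMod d) ℂ, IsPauli d g →
      IsPauli d (permMat d σ * g * star (permMat d σ))) :
    ∃ a b : ZMod d, a ≠ 0 ∧ ∀ z : ZMod d, σ z = a * z + b := by
  have hd2 : 1 < d := hd.one_lt
  have hX : IsPauli d (Xg d) := by
    refine ⟨0, 0, 1, ?_⟩
    simp [ZMod.val_zero, ZMod.val_one_eq_one_mod, Nat.mod_eq_of_lt hd2, om]
  obtain ⟨c, p, q, hM⟩ := h (Xg d) hX
  have key : ∀ z : ZMod d, σ (z + 1) = σ z + q := by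
    intro z
    have h1 := congrFun (congrFun hM (σ (z+1))) (σ z)
    rw [perm_conj_Xg] at h1
    simp only [Equiv.symm_apply_apply, if_pos rfl, Matrix.smul_apply,
      Zg_pow_mul_Xg_pow, smul_eq_mul] at h1
    by_cases hc : σ (z + 1) = σ z + (q.val : ℕ)
    · rw [hc, ZMod.natCast_val, ZMod.cast_id]
    · rw [if_neg hc] at h1; simp at h1
  refine ⟨q, σ 0, ?_, ?_⟩
  · intro hq
    haveI := Fact.mk hd
    have h10 := key 0
    rw [hq, add_zero, zero_add] at h10
    exact one_ne_zero (σ.injective h10)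
  · have hnat : ∀ n : ℕ, σ (n : ZMod d) = q * n + σ 0 := by
      intro n
      induction n with
      | zero => simp
      | succ n ih =>
        push_cast
        rw [key, ih]; ring
    intro z
    have := hnat z.val
    rwa [ZMod.natCast_val, ZMod.cast_id] at this
end

section
/- If P is a permutation gate on C^d, D a diagonal unitary, and the product DP has order d (d an odd prime) with P in the group N of affine permutation gates, then P is a power of the shift X, i.e., DP ∈ D̄·⟨X⟩. -/
open Matrix

/-- The permutation gate of the affine map z ↦ a·z + b on Z_d. -/
noncomputable def affMat (d : ℕ) (a b : ZMod d) : Matrix (ZMod d) (ZMod d) ℂ :=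
  fun i j => if i = a * j + b then 1 else 0

/-- If D is a diagonal unitary, P is an affine permutation gate, and DP has order d,
then P is a power of the shift X. -/
theorem diag_perm_order_d (d : ℕ) (hd : Nat.Prime d) (hodd : Odd d) [NeZero d]
    (a b : ZMod d) (ha : a ≠ 0)
    (D : Matrix (ZMod d) (ZMod d) ℂ) (hDdiag : D.IsDiag)
    (hDu : D ∈ Matrix.unitaryGroup (ZMod d) ℂ)
    (hord : orderOf (D * affMat d a b) = d) :
    ∃ c : ℕ, affMat d a b = Xg d ^ c := by
  haveI := Fact.mk hd
  -- multiplication of affine matrices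
  have hmul : ∀ (a' b' a'' b'' : ZMod d),
      affMat d a' b' * affMat d a'' b'' = affMat d (a' * a'') (a' * b'' + b') := by
    intro a' b' a'' b''
    ext i j
    simp only [affMat, Matrix.mul_apply]
    rw [Finset.sum_eq_single (a'' * j + b'')]
    · simp [mul_add, add_assoc, mul_assoc]
    · intro k _ hk; simp [hk]
    · simp
  -- powers of P
  have hpow : ∀ (a' b' : ZMod d) (k : ℕ), ∃ c : ZMod d,
      affMat d a' b' ^ k = affMat d (a' ^ k) c := by
    intro a' b' k
    induction k with
    | zero =>
      refine ⟨0, ?_⟩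
      ext i j
      simp [affMat, Matrix.one_apply]
    | succ n ih =>
      obtain ⟨c, hc⟩ := ih
      refine ⟨a' * c + b', ?_⟩
      rw [pow_succ', hc, hmul, ← pow_succ']
  -- commuting a diagonal past P
  have hswap : ∀ g : ZMod d → ℂ, affMat d a b * Matrix.diagonal g
      = Matrix.diagonal (fun i => g (a⁻¹ * (i - b))) * affMat d a b := by
    intro g
    ext i j
    rw [Matrix.mul_diagonal, Matrix.diagonal_mul]
    simp only [affMat]
    split_ifs with h
    · rw [one_mul, mul_one, h]
      congr 1
      rw [add_sub_cancel_right, inv_mul_cancel_left₀ ha]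
    · simp
  -- (D*P)^k = diagonal * P^k
  have hD2 : ∀ w : ZMod d → ℂ, D * Matrix.diagonal w
      = Matrix.diagonal (fun i => D.diag i * w i) := by
    intro w
    ext i j
    rw [Matrix.mul_diagonal, Matrix.diagonal_apply]
    by_cases h : i = j
    · subst h; rw [if_pos rfl]; rfl
    · rw [if_neg h, hDdiag h, zero_mul]
  have hDP : ∀ k : ℕ, ∃ g : ZMod d → ℂ,
      (D * affMat d a b) ^ k = Matrix.diagonal g * affMat d a b ^ k := by
    intro k
    induction k with
    | zero => exact ⟨fun _ => 1, by simp⟩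
    | succ n ih =>
      obtain ⟨g, hg⟩ := ih
      refine ⟨fun i => D.diag i * g (a⁻¹ * (i - b)), ?_⟩
      calc (D * affMat d a b) ^ (n + 1)
          = D * (affMat d a b * Matrix.diagonal g) * affMat d a b ^ n := by
            rw [pow_succ', hg]; simp only [mul_assoc]
        _ = D * Matrix.diagonal (fun i => g (a⁻¹ * (i - b)))
              * (affMat d a b * affMat d a b ^ n) := by
            rw [hswap]; simp only [mul_assoc]
        _ = _ := by rw [hD2, ← pow_succ']
  -- order d: (D*P)^d = 1
  have h1 : (D * affMat d a b) ^ d = 1 := by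
    have := pow_orderOf_eq_one (D * affMat d a b)
    rwa [hord] at this
  obtain ⟨g, hg⟩ := hDP d
  obtain ⟨c, hc⟩ := hpow a b d
  rw [hg, hc] at h1
  -- each diagonal entry forces σ^d = id
  have key : ∀ i : ZMod d, i = a ^ d * i + c := by
    intro i
    have h2 := congrFun (congrFun h1 i) i
    rw [Matrix.diagonal_mul, Matrix.one_apply_eq] at h2
    by_contra hne
    simp only [affMat, if_neg hne, mul_zero] at h2
    exact zero_ne_one h2
  have hc0 : c = 0 := by have := key 0; simpa using this.symm
  have ha1 : a = 1 := by
    have := key 1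
    rw [hc0, add_zero, mul_one, ZMod.pow_card] at this
    exact this.symm
  subst ha1
  -- conclude: affMat 1 b = Xg ^ b.val
  have hX : Xg d = affMat d 1 1 := by
    ext i j; simp [Xg, affMat]
  have hXpow : ∀ k : ℕ, affMat d 1 1 ^ k = affMat d 1 (k : ZMod d) := by
    intro k
    induction k with
    | zero =>
      ext i j; simp [affMat, Matrix.one_apply]
    | succ n ih =>
      rw [pow_succ', ih, hmul, one_mul, one_mul]
      congr 1
      push_cast
      ring
  refine ⟨b.val, ?_⟩
  rw [hX, hXpow, ZMod.natCast_val, ZMod.cast_id]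
end

section
/- Suppose (D₁X^{q₁}, D₂X^{q₂}) and (D₁X^{q₁}, D₃X^{q₂}) are both conjugate pairs, where D₁, D₂, D₃ are diagonal unitaries on C^d and q₁ ≠ 0 in Z_d. Then D₃ = ω^c D₂ for some c ∈ Z_d. -/
open Matrix

/-- Entries of powers of the shift matrix. -/
lemma Xg_pow_apply (d : ℕ) [NeZero d] (n : ℕ) (i j : ZMod d) :
    (Xg d ^ n) i j = if i = j + (n : ZMod d) then 1 else 0 := by
  induction n generalizing i j with
  | zero => simp [Matrix.one_apply]
  | succ n ih =>
    rw [pow_succ, Matrix.mul_apply]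
    simp only [Xg, mul_ite, mul_one, mul_zero, Finset.sum_ite_eq', Finset.mem_univ, if_true]
    rw [ih]
    have : j + 1 + (n : ZMod d) = j + ((n + 1 : ℕ) : ZMod d) := by push_cast; ring
    rw [this]

lemma isDiag_mul' {d : ℕ} [NeZero d] {A B : Matrix (ZMod d) (ZMod d) ℂ}
    (hA : A.IsDiag) (hB : B.IsDiag) : (A * B).IsDiag := by
  intro i j hij
  rw [Matrix.mul_apply]
  apply Finset.sum_eq_zero
  intro k _
  by_cases h : i = k
  · subst h; rw [hB hij, mul_zero]
  · rw [hA h, zero_mul]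

lemma isDiag_mul_comm' {d : ℕ} [NeZero d] {A B : Matrix (ZMod d) (ZMod d) ℂ}
    (hA : A.IsDiag) (hB : B.IsDiag) : A * B = B * A := by
  rw [← hA.diagonal_diag, ← hB.diagonal_diag, Matrix.diagonal_mul_diagonal,
    Matrix.diagonal_mul_diagonal]
  exact congrArg Matrix.diagonal (funext fun z => mul_comm _ _)

/-- If (D₁X^{q₁}, D₂X^{q₂}) and (D₁X^{q₁}, D₃X^{q₂}) are both conjugate pairs with
D₁, D₂, D₃ diagonal unitaries and q₁ ≠ 0, then D₃ = ω^c D₂ for some c. -/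
theorem diag_determined_by_pair (d : ℕ) (hd : Nat.Prime d) (hodd : Odd d) [NeZero d]
    (D₁ D₂ D₃ : Matrix (ZMod d) (ZMod d) ℂ)
    (h₁ : D₁.IsDiag) (h₂ : D₂.IsDiag) (h₃ : D₃.IsDiag)
    (hu₁ : D₁ ∈ Matrix.unitaryGroup (ZMod d) ℂ)
    (hu₂ : D₂ ∈ Matrix.unitaryGroup (ZMod d) ℂ)
    (hu₃ : D₃ ∈ Matrix.unitaryGroup (ZMod d) ℂ)
    (q₁ q₂ : ZMod d) (hq₁ : q₁ ≠ 0)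
    (hUd : (D₁ * Xg d ^ q₁.val) ^ d = 1)
    (hVd : (D₂ * Xg d ^ q₂.val) ^ d = 1)
    (hV'd : (D₃ * Xg d ^ q₂.val) ^ d = 1)
    (hcomm : (D₁ * Xg d ^ q₁.val) * (D₂ * Xg d ^ q₂.val)
        = om d • ((D₂ * Xg d ^ q₂.val) * (D₁ * Xg d ^ q₁.val)))
    (hcomm' : (D₁ * Xg d ^ q₁.val) * (D₃ * Xg d ^ q₂.val)
        = om d • ((D₃ * Xg d ^ q₂.val) * (D₁ * Xg d ^ q₁.val))) :
    ∃ c : ZMod d, D₃ = om d ^ c.val • D₂ := by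
  haveI : Fact d.Prime := ⟨hd⟩
  have hstar₂ : star D₂ * D₂ = 1 := hu₂.1
  have hstar₁ : star D₁ * D₁ = 1 := hu₁.1
  have hMdiag : (D₃ * star D₂).IsDiag := isDiag_mul' h₃ h₂.conjTranspose
  -- M * V = V'
  have hMV : (D₃ * star D₂) * (D₂ * Xg d ^ q₂.val) = D₃ * Xg d ^ q₂.val := by
    rw [Matrix.mul_assoc, ← Matrix.mul_assoc (star D₂), hstar₂, Matrix.one_mul]
  -- V invertible
  have hd1 : d - 1 + 1 = d := Nat.succ_pred_eq_of_pos hd.pos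
  have hVinv : (D₂ * Xg d ^ q₂.val) * (D₂ * Xg d ^ q₂.val) ^ (d - 1) = 1 := by
    rw [← pow_succ', hd1, hVd]
  have cancelV : ∀ A B : Matrix (ZMod d) (ZMod d) ℂ,
      A * (D₂ * Xg d ^ q₂.val) = B * (D₂ * Xg d ^ q₂.val) → A = B := by
    intro A B h
    have := congrArg (· * (D₂ * Xg d ^ q₂.val) ^ (d - 1)) h
    simpa [Matrix.mul_assoc, hVinv] using this
  have cancelD₁ : ∀ A B : Matrix (ZMod d) (ZMod d) ℂ, D₁ * A = D₁ * B → A = B := by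
    intro A B h
    have := congrArg (star D₁ * ·) h
    simpa [← Matrix.mul_assoc, hstar₁] using this
  -- U commutes with M
  have hUM : (D₁ * Xg d ^ q₁.val) * (D₃ * star D₂)
      = (D₃ * star D₂) * (D₁ * Xg d ^ q₁.val) := by
    apply cancelV
    calc ((D₁ * Xg d ^ q₁.val) * (D₃ * star D₂)) * (D₂ * Xg d ^ q₂.val)
        = (D₁ * Xg d ^ q₁.val) * ((D₃ * star D₂) * (D₂ * Xg d ^ q₂.val)) := by
          rw [Matrix.mul_assoc]
      _ = (D₁ * Xg d ^ q₁.val) * (D₃ * Xg d ^ q₂.val) := by rw [hMV]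
      _ = om d • ((D₃ * Xg d ^ q₂.val) * (D₁ * Xg d ^ q₁.val)) := hcomm'
      _ = om d • (((D₃ * star D₂) * (D₂ * Xg d ^ q₂.val)) * (D₁ * Xg d ^ q₁.val)) := by
          rw [hMV]
      _ = (D₃ * star D₂) * (om d • ((D₂ * Xg d ^ q₂.val) * (D₁ * Xg d ^ q₁.val))) := by
          simp only [Matrix.mul_smul, Matrix.mul_assoc]
      _ = (D₃ * star D₂) * ((D₁ * Xg d ^ q₁.val) * (D₂ * Xg d ^ q₂.val)) := by rw [← hcomm]
      _ = ((D₃ * star D₂) * (D₁ * Xg d ^ q₁.val)) * (D₂ * Xg d ^ q₂.val) := by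
          simp only [Matrix.mul_assoc]
  -- hence X^{q₁} commutes with M
  have hXM : Xg d ^ q₁.val * (D₃ * star D₂) = (D₃ * star D₂) * Xg d ^ q₁.val := by
    apply cancelD₁
    calc D₁ * (Xg d ^ q₁.val * (D₃ * star D₂))
        = (D₁ * Xg d ^ q₁.val) * (D₃ * star D₂) := by rw [Matrix.mul_assoc]
      _ = (D₃ * star D₂) * (D₁ * Xg d ^ q₁.val) := hUM
      _ = ((D₃ * star D₂) * D₁) * Xg d ^ q₁.val := by simp only [Matrix.mul_assoc]
      _ = (D₁ * (D₃ * star D₂)) * Xg d ^ q₁.val := by rw [isDiag_mul_comm' hMdiag h₁]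
      _ = D₁ * ((D₃ * star D₂) * Xg d ^ q₁.val) := by rw [Matrix.mul_assoc]
  have hq₁cast : ((q₁.val : ℕ) : ZMod d) = q₁ := ZMod.natCast_rightInverse q₁
  -- diagonal entries of M are shift-invariant
  have hshift : ∀ z : ZMod d, (D₃ * star D₂) z z = (D₃ * star D₂) (z + q₁) (z + q₁) := by
    intro z
    have h := congrFun (congrFun hXM (z + q₁)) z
    rw [Matrix.mul_apply, Matrix.mul_apply] at h
    simp only [Xg_pow_apply, hq₁cast, mul_ite, ite_mul, one_mul, zero_mul, mul_one, mul_zero,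
      add_left_inj, Finset.sum_ite_eq, Finset.sum_ite_eq', Finset.mem_univ, if_true] at h
    exact h
  set lam := (D₃ * star D₂) 0 0 with hlam
  have horb : ∀ n : ℕ, (D₃ * star D₂) ((n : ZMod d) * q₁) ((n : ZMod d) * q₁) = lam := by
    intro n
    induction n with
    | zero => simp [hlam]
    | succ n ih =>
      have : ((n + 1 : ℕ) : ZMod d) * q₁ = (n : ZMod d) * q₁ + q₁ := by push_cast; ring
      rw [this, ← hshift]
      exact ih
  have hconst : ∀ z : ZMod d, (D₃ * star D₂) z z = lam := by
    intro z
    have := horb (z * q₁⁻¹).val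
    rwa [ZMod.natCast_rightInverse _, mul_assoc, inv_mul_cancel₀ hq₁, mul_one] at this
  have hMscalar : D₃ * star D₂ = lam • (1 : Matrix (ZMod d) (ZMod d) ℂ) := by
    ext i j
    by_cases h : i = j
    · subst h
      rw [hconst i, Matrix.smul_apply, Matrix.one_apply_eq, smul_eq_mul, mul_one]
    · rw [hMdiag h, Matrix.smul_apply, Matrix.one_apply_ne h, smul_eq_mul, mul_zero]
  have hV'lam : D₃ * Xg d ^ q₂.val = lam • (D₂ * Xg d ^ q₂.val) := by
    rw [← hMV, hMscalar, Matrix.smul_mul, Matrix.one_mul]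
  have hlamd : lam ^ d = 1 := by
    have h : (lam • (D₂ * Xg d ^ q₂.val)) ^ d = 1 := by rw [← hV'lam]; exact hV'd
    rw [smul_pow, hVd] at h
    have := congrFun (congrFun h 0) 0
    simpa [Matrix.one_apply] using this
  have hprim : IsPrimitiveRoot (om d) d := by
    rw [om]; exact Complex.isPrimitiveRoot_exp d (NeZero.ne d)
  obtain ⟨i, hi, hipow⟩ := hprim.eq_pow_of_pow_eq_one hlamd
  refine ⟨(i : ZMod d), ?_⟩
  rw [ZMod.val_cast_of_lt hi, hipow]
  have hD₃ : D₃ = (D₃ * star D₂) * D₂ := by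
    rw [Matrix.mul_assoc, hstar₂, Matrix.mul_one]
  rw [hD₃, hMscalar, Matrix.smul_mul, Matrix.one_mul]
end

section
/- Let d be an odd prime, c ∈ Z_d nonzero, and D' a diagonal unitary on C^d with det(D') = 1. Then there exists a diagonal unitary D such that D' = D X^c D* X^{−c}. -/
open Matrix

lemma conj_by_shift (d : ℕ) [NeZero d] (m n : ℕ) (b : ZMod d → ℂ)
    (h : (m : ZMod d) + n = 0) :
    Xg d ^ m * Matrix.diagonal b * Xg d ^ n
      = Matrix.diagonal (fun z => b (z - (m : ZMod d))) := by
  ext i j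
  rw [Matrix.mul_apply]
  rw [Finset.sum_eq_single ((j : ZMod d) + n)]
  · rw [Matrix.mul_diagonal, Xg_pow_apply, Xg_pow_apply]
    have hn : (n : ZMod d) = -(m : ZMod d) := by linear_combination h
    have h1 : j + (n : ZMod d) + m = j := by rw [hn]; ring
    rw [h1, hn]
    by_cases hij : i = j
    · simp [hij, Matrix.diagonal_apply_eq, sub_eq_add_neg]
    · simp [hij, Matrix.diagonal_apply_ne _ hij]
  · intro x _ hx
    rw [Xg_pow_apply]
    simp [hx]
  · simp

/-- Any diagonal unitary D' of determinant 1 can be written as D X^c D* X^{−c}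
for a diagonal unitary D, for any fixed nonzero c. -/
theorem diag_as_commutator (d : ℕ) (hd : Nat.Prime d) (hodd : Odd d) [NeZero d]
    (c : ZMod d) (hc : c ≠ 0)
    (D' : Matrix (ZMod d) (ZMod d) ℂ) (hdiag : D'.IsDiag)
    (hu : D' ∈ Matrix.unitaryGroup (ZMod d) ℂ) (hdet : D'.det = 1) :
    ∃ D : Matrix (ZMod d) (ZMod d) ℂ,
      D.IsDiag ∧ D ∈ Matrix.unitaryGroup (ZMod d) ℂ ∧
      D' = D * Xg d ^ c.val * star D * Xg d ^ (-c).val := by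

  haveI := Fact.mk hd
  set a : ZMod d → ℂ := D'.diag with ha
  have hD' : D' = Matrix.diagonal a := hdiag.diagonal_diag.symm
  -- unitarity of the entries
  have hua : ∀ z, (starRingEnd ℂ) (a z) * a z = 1 := by
    intro z
    have h1 : star D' * D' = 1 := (Unitary.mem_iff.mp hu).1
    rw [hD', Matrix.star_eq_conjTranspose, Matrix.diagonal_conjTranspose,
      Matrix.diagonal_mul_diagonal] at h1
    have := congrFun (congrFun h1 z) z
    rw [Matrix.diagonal_apply_eq, Matrix.one_apply_eq] at this
    simpa using this
  -- determinant condition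
  have hdet' : ∏ z : ZMod d, a z = 1 := by
    rw [hD', Matrix.det_diagonal] at hdet; exact hdet
  -- the phases g
  set g : ZMod d → ℂ := fun z => ∏ j ∈ Finset.range (z * c⁻¹).val, a (((j + 1 : ℕ) : ZMod d) * c)
    with hg
  have hgu : ∀ z, (starRingEnd ℂ) (g z) * g z = 1 := by
    intro z
    rw [hg]
    simp only [map_prod, ← Finset.prod_mul_distrib]
    rw [Finset.prod_congr rfl (fun j _ => hua _)]
    simp
  have hkc : ∀ z : ZMod d, (((z * c⁻¹).val : ℕ) : ZMod d) * c = z := by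
    intro z
    rw [ZMod.natCast_val, ZMod.cast_id, mul_assoc, inv_mul_cancel₀ hc, mul_one]
  have hprod_all : ∏ j ∈ Finset.range d, a ((j : ZMod d) * c) = 1 := by
    rw [← hdet']
    exact Finset.prod_nbij' (fun j => (j : ZMod d) * c) (fun z => (z * c⁻¹).val)
      (fun j _ => Finset.mem_univ _)
      (fun z _ => Finset.mem_range.mpr (ZMod.val_lt _))
      (by
        intro j hj
        rw [Finset.mem_range] at hj
        show (((j : ZMod d) * c) * c⁻¹).val = j
        rw [mul_assoc, mul_inv_cancel₀ hc, mul_one, ZMod.val_natCast_of_lt hj])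
      (fun z _ => hkc z)
      (fun j _ => rfl)
  -- key recursion
  have hkey : ∀ z, g z * (starRingEnd ℂ) (g (z - c)) = a z := by
    intro z
    have hz := hkc z
    rcases Nat.eq_zero_or_eq_succ_pred (z * c⁻¹).val with h0 | hs
    · -- z = 0 case
      have hz0 : z = 0 := by rw [← hz, h0]; simp
      have hdpos : 0 < d := hd.pos
      have hneg : ((z - c) * c⁻¹).val = d - 1 := by
        rw [hz0, zero_sub, neg_mul, mul_inv_cancel₀ hc]
        rcases d with _ | m
        · exact absurd rfl (NeZero.ne 0)
        · exact ZMod.val_neg_one m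
      have hd1 : d = (d - 1) + 1 := by omega
      have hsplit := Finset.prod_range_succ' (fun j => a ((j : ZMod d) * c)) (d - 1)
      rw [← hd1] at hsplit
      rw [hsplit] at hprod_all
      have hprod : a 0 * g (z - c) = 1 := by
        rw [hg]
        simp only
        rw [hneg, ← hprod_all]
        push_cast
        rw [mul_comm]
        simp
      have : (starRingEnd ℂ) (g (z - c)) = a 0 := by
        have h2 := hgu (z - c)
        calc (starRingEnd ℂ) (g (z - c))
            = (starRingEnd ℂ) (g (z - c)) * (a 0 * g (z - c)) := by rw [hprod, mul_one]
          _ = a 0 * ((starRingEnd ℂ) (g (z - c)) * g (z - c)) := by ring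
          _ = a 0 := by rw [h2, mul_one]
      rw [hz0] at this ⊢
      rw [hg]
      simp only [zero_mul, ZMod.val_zero, Finset.range_zero, Finset.prod_empty, one_mul]
      exact this
    · -- z ≠ 0 on the cycle: val = k' + 1
      set k' := (z * c⁻¹).val - 1 with hk'
      have hval : (z * c⁻¹).val = k' + 1 := hs
      have hlt : k' + 1 < d := hval ▸ ZMod.val_lt _
      have hsub : ((z - c) * c⁻¹).val = k' := by
        have h1 : (z - c) * c⁻¹ = ((k' : ℕ) : ZMod d) := by
          rw [sub_mul, mul_inv_cancel₀ hc]
          have : z * c⁻¹ = (((k' + 1 : ℕ)) : ZMod d) := by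
            rw [← hval, ZMod.natCast_val, ZMod.cast_id]
          rw [this]; push_cast; ring
        rw [h1, ZMod.val_natCast_of_lt (by omega)]
      have hgz : g z = g (z - c) * a z := by
        rw [hg]
        simp only
        rw [hval, hsub, Finset.prod_range_succ]
        congr 1
        rw [← hz, hval]
      rw [hgz, mul_comm (g (z - c)) (a z), mul_assoc]
      have h2 : g (z - c) * (starRingEnd ℂ) (g (z - c)) = 1 := by
        rw [mul_comm]; exact hgu _
      rw [h2, mul_one]
  -- assemble
  refine ⟨Matrix.diagonal g, Matrix.isDiag_diagonal g, ?_, ?_⟩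
  · rw [Matrix.mem_unitaryGroup_iff']
    rw [Matrix.star_eq_conjTranspose, Matrix.diagonal_conjTranspose,
      Matrix.diagonal_mul_diagonal]
    ext i j
    rcases eq_or_ne i j with rfl | h
    · simpa [Matrix.diagonal_apply_eq] using hgu i
    · simp [Matrix.diagonal_apply_ne _ h, Matrix.one_apply_ne h]
  · have hstar : star (Matrix.diagonal g)
        = Matrix.diagonal (fun z => (starRingEnd ℂ) (g z)) := by
      rw [Matrix.star_eq_conjTranspose, Matrix.diagonal_conjTranspose]
      rfl
    have hc1 : ((c.val : ℕ) : ZMod d) = c := by rw [ZMod.natCast_val, ZMod.cast_id]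
    have hc2 : ((c.val : ℕ) : ZMod d) + (((-c).val : ℕ) : ZMod d) = 0 := by
      rw [hc1, ZMod.natCast_val, ZMod.cast_id]; ring
    rw [mul_assoc, mul_assoc, ← mul_assoc (Xg d ^ c.val), hstar,
      conj_by_shift d c.val (-c).val _ hc2, hc1,
      Matrix.diagonal_mul_diagonal, hD']
    exact congrArg Matrix.diagonal (funext fun z => (hkey z).symm)
end
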